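/- If X_1, ..., X_n are i.i.d. copies of a mean-zero random variable X with finite p-th moment for some p ∈ [1, 2], then ‖X_1 + ... + X_n‖_p ≤ (2n)^{1/p} · ‖X‖_p, where ‖·‖_p denotes the L^p norm. -/

import Mathlib

/-!
For `1 ≤ p ≤ 2` and all reals `a, b` one has the one-step Taylor bound
`|a + b| ^ p ≤ |a| ^ p + p * a * |a| ^ (p - 2) * b + 2 * |b| ^ p`.
Apply it to `a = S`, a partial sum, and `b = Y`, the next summand: `Y` is independent of `S` and
centred, so the middle term has expectation zero and `E|S + Y|^p ≤ E|S|^p + 2 E|Y|^p`.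
Induction gives the von Bahr–Esseen inequality `E|∑ Xᵢ|^p ≤ 2 ∑ E|Xᵢ|^p`, and for identically
distributed summands the right side is `2 n E|X|^p`.
-/

open MeasureTheory ProbabilityTheory

namespace Real

variable {p : ℝ}

lemma rpow_add_mul_rpow_sub_one_mul_sub_le_rpow (hp : 1 ≤ p) {x y : ℝ} (hx : 0 ≤ x)
    (hy : 0 < y) : y ^ p + p * y ^ (p - 1) * (x - y) ≤ x ^ p := by
  have hbern := one_add_mul_self_le_rpow_one_add (s := x / y - 1)
    (by linarith [div_nonneg hx hy.le]) hp
  rw [add_sub_cancel, div_rpow hx hy.le, le_div_iff₀ (rpow_pos_of_pos hy p)] at hbern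
  calc y ^ p + p * y ^ (p - 1) * (x - y) = (1 + p * (x / y - 1)) * y ^ p := by
        rw [rpow_sub_one hy.ne']; field_simp
    _ ≤ x ^ p := hbern

lemma rpow_sub_rpow_mul_sub_le {q : ℝ} (hq0 : 0 ≤ q) (hq1 : q ≤ 1) {u v : ℝ} (hu : 0 ≤ u)
    (hv : 0 ≤ v) : (u ^ q - v ^ q) * (u - v) ≤ |u - v| ^ (q + 1) := by
  wlog hvu : v ≤ u generalizing u v
  · calc (u ^ q - v ^ q) * (u - v) = (v ^ q - u ^ q) * (v - u) := by ring
      _ ≤ |v - u| ^ (q + 1) := this hv hu (le_of_not_ge hvu)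
      _ = |u - v| ^ (q + 1) := by rw [abs_sub_comm]
  have hsub : u ^ q ≤ v ^ q + (u - v) ^ q := by
    simpa using rpow_add_le_add_rpow hv (sub_nonneg.2 hvu) hq0 hq1
  rw [abs_of_nonneg (sub_nonneg.2 hvu), rpow_add_one' (sub_nonneg.2 hvu) (by linarith)]
  exact mul_le_mul_of_nonneg_right (by linarith) (sub_nonneg.2 hvu)

/-- The tangent line at `u`, corrected by the `(p - 1)`-Hölder continuity of `t ↦ t ^ (p - 1)`. -/
lemma rpow_le_rpow_add_mul_sub_add_abs_rpow (hp1 : 1 ≤ p) (hp2 : p ≤ 2) {u v : ℝ} (hu : 0 < u)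
    (hv : 0 ≤ v) : u ^ p ≤ v ^ p + p * v ^ (p - 1) * (u - v) + p * |u - v| ^ p := by
  have htangent := rpow_add_mul_rpow_sub_one_mul_sub_le_rpow hp1 hv hu
  have hholder := rpow_sub_rpow_mul_sub_le (q := p - 1) (by linarith) (by linarith) hu.le hv
  rw [sub_add_cancel] at hholder
  nlinarith

/-- Young's inequality for the conjugate exponents `p / (p - 1)` and `p`. -/
lemma mul_rpow_sub_one_mul_le (hp1 : 1 ≤ p) {a c : ℝ} (ha : 0 ≤ a) (hc : 0 ≤ c) :
    p * (a ^ (p - 1) * c) ≤ (p - 1) * a ^ p + c ^ p := by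
  have hp0 : 0 < p := by linarith
  have hgm := geom_mean_le_arith_mean2_weighted (w₁ := (p - 1) / p) (w₂ := 1 / p)
    (div_nonneg (by linarith) hp0.le) (by positivity) (rpow_nonneg ha p) (rpow_nonneg hc p)
    (by field_simp; ring)
  rw [← rpow_mul ha, ← rpow_mul hc, mul_div_cancel₀ _ hp0.ne', mul_one_div_cancel hp0.ne',
    rpow_one] at hgm
  have := mul_le_mul_of_nonneg_left hgm hp0.le
  field_simp at this ⊢
  linarith

/-- `a * |a| ^ (p - 2)` is `sign a * |a| ^ (p - 1)`, the derivative of `|a| ^ p / p`; it vanishes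
at `a = 0` for every `p`. -/
lemma abs_add_rpow_le (hp1 : 1 ≤ p) (hp2 : p ≤ 2) (a b : ℝ) :
    |a + b| ^ p ≤ |a| ^ p + p * (a * |a| ^ (p - 2) * b) + 2 * |b| ^ p := by
  wlog ha : 0 ≤ a generalizing a b
  · have hneg := this (-a) (-b) (by linarith)
    rw [← neg_add, abs_neg, abs_neg, abs_neg] at hneg
    linear_combination hneg
  rcases ha.eq_or_lt with rfl | ha
  · simp only [abs_zero, zero_add, zero_mul, mul_zero, zero_rpow (by linarith : p ≠ 0)]
    linarith [rpow_nonneg (abs_nonneg b) p]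
  have hderiv : a * |a| ^ (p - 2) = a ^ (p - 1) := by
    rw [abs_of_pos ha, mul_comm, ← rpow_add_one ha.ne']; ring_nf
  rw [hderiv, abs_of_pos ha]
  rcases lt_or_ge 0 (a + b) with hab | hab
  · have htaylor := rpow_le_rpow_add_mul_sub_add_abs_rpow hp1 hp2 hab ha.le
    rw [add_sub_cancel_left] at htaylor
    rw [abs_of_pos hab]
    nlinarith [rpow_nonneg (abs_nonneg b) p]
  · -- here `0 < a ≤ -b`, so `|a + b| ≤ |b|`, and Young absorbs the linear term
    have hyoung := mul_rpow_sub_one_mul_le hp1 ha.le (neg_nonneg.2 (by linarith : b ≤ 0))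
    have hmono : |a + b| ^ p ≤ |b| ^ p :=
      rpow_le_rpow (abs_nonneg _) (by rw [abs_of_nonpos hab, abs_of_neg (by linarith)]; linarith)
        (by linarith)
    rw [abs_of_neg (by linarith : b < 0)] at hmono ⊢
    nlinarith [rpow_nonneg ha.le p]

lemma rpow_le_one_add_rpow {x r s : ℝ} (hx : 0 ≤ x) (hr : 0 ≤ r) (hrs : r ≤ s) :
    x ^ r ≤ 1 + x ^ s := by
  rcases le_or_gt x 1 with hx1 | hx1
  · linarith [rpow_le_one hx hx1 hr, rpow_nonneg hx s]
  · linarith [rpow_le_rpow_of_exponent_le hx1.le hrs]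

lemma abs_mul_abs_rpow_sub_two_le (hp : 1 ≤ p) (t : ℝ) : |t * |t| ^ (p - 2)| ≤ 1 + |t| ^ p := by
  rcases eq_or_ne t 0 with rfl | ht
  · simp only [zero_mul, abs_zero]
    positivity
  rw [abs_mul, abs_of_nonneg (rpow_nonneg (abs_nonneg t) _), mul_comm,
    ← rpow_add_one (abs_ne_zero.2 ht)]
  exact rpow_le_one_add_rpow (abs_nonneg t) (by linarith) (by linarith)

end Real

open Real

lemma MeasureTheory.MemLp.integrable_abs_rpow {Ω : Type*} [MeasurableSpace Ω] {μ : Measure Ω}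
    {p : ℝ} (hp : 0 < p) {f : Ω → ℝ} (hf : MemLp f (ENNReal.ofReal p) μ) :
    Integrable (fun ω => |f ω| ^ p) μ := by
  simpa [ENNReal.toReal_ofReal hp.le] using
    hf.integrable_norm_rpow (by simpa using hp) ENNReal.ofReal_ne_top

namespace ProbabilityTheory

variable {Ω : Type*} [MeasurableSpace Ω] {μ : Measure Ω} [IsProbabilityMeasure μ] {p : ℝ}

lemma integral_abs_add_rpow_le (hp1 : 1 ≤ p) (hp2 : p ≤ 2) {S Y : Ω → ℝ}
    (hS : MemLp S (ENNReal.ofReal p) μ) (hY : MemLp Y (ENNReal.ofReal p) μ)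
    (hSY : IndepFun S Y μ) (hY0 : ∫ ω, Y ω ∂μ = 0) :
    ∫ ω, |S ω + Y ω| ^ p ∂μ ≤ ∫ ω, |S ω| ^ p ∂μ + 2 * ∫ ω, |Y ω| ^ p ∂μ := by
  have hp0 : 0 < p := by linarith
  set g : ℝ → ℝ := fun t => t * |t| ^ (p - 2)
  have hg : Measurable g := by fun_prop
  have hgS_meas : AEStronglyMeasurable (fun ω => g (S ω)) μ :=
    (hg.comp_aemeasurable hS.1.aemeasurable).aestronglyMeasurable
  have hgS : Integrable (fun ω => g (S ω)) μ :=
    ((integrable_const 1).add (hS.integrable_abs_rpow hp0)).mono' hgS_meas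
      (ae_of_all _ fun ω => abs_mul_abs_rpow_sub_two_le hp1 (S ω))
  have hgSY : IndepFun (fun ω => g (S ω)) Y μ := hSY.comp hg measurable_id
  have hYint : Integrable Y μ := hY.integrable (by simpa using hp1)
  have hcross : ∫ ω, g (S ω) * Y ω ∂μ = 0 := by
    rw [hgSY.integral_fun_mul_eq_mul_integral hgS_meas hY.1, hY0, mul_zero]
  have hS_int := hS.integrable_abs_rpow hp0
  have hY_int := hY.integrable_abs_rpow hp0
  have hcross_int : Integrable (fun ω => p * (g (S ω) * Y ω)) μ :=
    (hgSY.integrable_mul hgS hYint).const_mul p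
  have hfirst_two : Integrable (fun ω => |S ω| ^ p + p * (g (S ω) * Y ω)) μ :=
    hS_int.add hcross_int
  calc ∫ ω, |S ω + Y ω| ^ p ∂μ
      ≤ ∫ ω, |S ω| ^ p + p * (g (S ω) * Y ω) + 2 * |Y ω| ^ p ∂μ :=
        integral_mono ((hS.add hY).integrable_abs_rpow hp0)
          (hfirst_two.add (hY_int.const_mul 2))
          fun ω => abs_add_rpow_le hp1 hp2 (S ω) (Y ω)
    _ = ∫ ω, |S ω| ^ p ∂μ + 2 * ∫ ω, |Y ω| ^ p ∂μ := by
        rw [integral_add hfirst_two (hY_int.const_mul 2),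
          integral_add hS_int hcross_int, integral_const_mul, integral_const_mul, hcross,
          mul_zero, add_zero]

theorem integral_abs_sum_rpow_le (hp1 : 1 ≤ p) (hp2 : p ≤ 2) {ι : Type*} {X : ι → Ω → ℝ}
    (hindep : iIndepFun X μ) (hX : ∀ i, MemLp (X i) (ENNReal.ofReal p) μ)
    (hmean : ∀ i, ∫ ω, X i ω ∂μ = 0) (s : Finset ι) :
    ∫ ω, |∑ i ∈ s, X i ω| ^ p ∂μ ≤ 2 * ∑ i ∈ s, ∫ ω, |X i ω| ^ p ∂μ := by
  classical
  induction s using Finset.induction_on with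
  | empty => simp [zero_rpow (by linarith : p ≠ 0)]
  | insert j s hj ih =>
    have hsum : MemLp (fun ω => ∑ i ∈ s, X i ω) (ENNReal.ofReal p) μ := by
      simpa only [Finset.sum_fn] using memLp_finsetSum' s fun i _ => hX i
    have hindep_j : IndepFun (fun ω => ∑ i ∈ s, X i ω) (X j) μ := by
      simpa only [Finset.sum_fn] using
        hindep.indepFun_finsetSum_of_notMem₀ (fun i => (hX i).1.aemeasurable) hj
    simp only [Finset.sum_insert hj, add_comm (X j _)]
    linarith [integral_abs_add_rpow_le hp1 hp2 hsum (hX j) hindep_j (hmean j)]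

end ProbabilityTheory

/-- If `X_1, ..., X_n` are i.i.d. copies of a mean-zero random variable `X` with finite `p`-th
moment for `p ∈ [1,2]`, then `‖X_1 + ... + X_n‖_p ≤ (2n)^(1/p) * ‖X‖_p`. -/
theorem iid_sum_Lp_bound {Ω : Type*} [MeasurableSpace Ω] (μ : Measure Ω)
    [IsProbabilityMeasure μ] (n : ℕ) (X : Ω → ℝ) (Xs : Fin n → Ω → ℝ)
    (hindep : iIndepFun Xs μ)
    (hident : ∀ i, IdentDistrib (Xs i) X μ μ)
    (hmean : ∫ ω, X ω ∂μ = 0)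
    (p : ℝ) (hp1 : 1 ≤ p) (hp2 : p ≤ 2)
    (hX : MemLp X (ENNReal.ofReal p) μ) :
    (∫ ω, |∑ i, Xs i ω| ^ p ∂μ) ^ (1 / p) ≤
      (2 * n) ^ (1 / p) * (∫ ω, |X ω| ^ p ∂μ) ^ (1 / p) := by
  have hmoment (i : Fin n) : ∫ ω, |Xs i ω| ^ p ∂μ = ∫ ω, |X ω| ^ p ∂μ :=
    ((hident i).comp (measurable_abs.pow_const p)).integral_eq
  have hbound := integral_abs_sum_rpow_le hp1 hp2 hindep (fun i => (hident i).symm.memLp_snd hX)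
    (fun i => (hident i).integral_eq.trans hmean) Finset.univ
  simp only [hmoment, Finset.sum_const, Finset.card_univ, Fintype.card_fin, nsmul_eq_mul,
    ← mul_assoc] at hbound
  have hX_nonneg : 0 ≤ ∫ ω, |X ω| ^ p ∂μ := integral_nonneg fun ω => by positivity
  calc (∫ ω, |∑ i, Xs i ω| ^ p ∂μ) ^ (1 / p)
      ≤ (2 * n * ∫ ω, |X ω| ^ p ∂μ) ^ (1 / p) :=
        rpow_le_rpow (integral_nonneg fun ω => by positivity) hbound (by positivity)
    _ = (2 * n) ^ (1 / p) * (∫ ω, |X ω| ^ p ∂μ) ^ (1 / p) := mul_rpow (by positivity) hX_nonneg
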